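/- arXiv:2111.07701 — 7 statements merged into one kernel-verified Lean document; each statement's English description precedes it below -/
import Mathlib

section
/- Let n ≥ 1 and d ≥ 1 be integers and M > 0 a real number. Let φ : ℝⁿ → ℝ be continuous with 0 ≤ φ(x) ≤ C₀·(1 + ‖x‖₂^{d−1}) for some constant C₀ ≥ 0 and all x in the nonnegative orthant ℝⁿ₊, and let g₁, …, g_m : ℝⁿ → ℝ be continuous functions with |g_i(x)| ≤ C_i·(1 + ‖x‖₂^{d−1}) on ℝⁿ₊ for constants C_i ≥ 0, and let q₁, …, q_m ∈ ℝ. Let F be the set of Borel probability measures μ on ℝⁿ that are supported in ℝⁿ₊ and satisfy ∫ g_i dμ = q_i for all i ∈ {1,…,m} and ∫ ‖x‖₂^d dμ ≤ M. If F is nonempty, then there exists μ* ∈ F with ∫ φ dμ* = inf { ∫ φ dμ : μ ∈ F }, i.e. the infimum is attained. -/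
/-!
By Jensen's inequality and Carathéodory's theorem, every feasible measure is approximated, in
the finitely many moments that matter, by a convex combination of `m + 3` Dirac masses in the
orthant. Along a minimizing sequence of such atomic measures pass to a subsequence on which every
atom either converges or escapes to infinity. Since the `d`-th moments stay bounded, an escaping
atom of norm `t` has mass `O(t⁻ᵈ)`, so it contributes nothing in the limit to integrals of
functions of growth order `d - 1`. The surviving atoms form a feasible measure (the `d`-th moment
bound passes to the limit by lower semicontinuity) whose objective value is the infimum.
-/

open MeasureTheory Filter Topology Module

theorem exists_fin_sum_smul_eq_of_mem_convexHull {𝕜 V : Type*} [Field 𝕜] [LinearOrder 𝕜]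
    [IsStrictOrderedRing 𝕜] [AddCommGroup V] [Module 𝕜 V] [FiniteDimensional 𝕜 V]
    {s : Set V} {v : V} (hv : v ∈ convexHull 𝕜 s) :
    ∃ (w : Fin (finrank 𝕜 V + 1) → 𝕜) (z : Fin (finrank 𝕜 V + 1) → V),
      (∀ j, 0 ≤ w j) ∧ ∑ j, w j = 1 ∧ (∀ j, z j ∈ s) ∧ ∑ j, w j • z j = v := by
  classical
  obtain ⟨ι, _, z, w, hzs, hz, hw, hw1, hwz⟩ := eq_pos_convex_span_of_mem_convexHull hv
  obtain ⟨s₀, hs₀⟩ := convexHull_nonempty_iff.1 ⟨v, hv⟩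
  have hcard : Fintype.card ι ≤ Fintype.card (Fin (finrank 𝕜 V + 1)) := by
    simpa using hz.card_le_finrank_succ.trans (Nat.succ_le_succ (Submodule.finrank_le _))
  obtain ⟨e⟩ := Function.Embedding.nonempty_of_card_le hcard
  -- pad Carathéodory's affinely independent family with atoms of weight zero
  refine ⟨Function.extend e w 0, Function.extend e z fun _ => s₀, fun j => ?_, ?_, fun j => ?_, ?_⟩
  · rw [Function.extend_def]; split_ifs
    exacts [(hw _).le, le_rfl]
  · rw [← hw1]
    refine (Fintype.sum_of_injective e e.injective _ _ (fun j hj => ?_) fun i => ?_).symm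
    · exact Function.extend_apply' _ _ _ (by simpa using hj)
    · rw [e.injective.extend_apply]
  · rw [Function.extend_def]; split_ifs
    exacts [hzs (Set.mem_range_self _), hs₀]
  · rw [← hwz]
    refine (Fintype.sum_of_injective e e.injective _ _ (fun j hj => ?_) fun i => ?_).symm
    · rw [Function.extend_apply' _ _ _ (by simpa using hj)]; simp
    · rw [e.injective.extend_apply, e.injective.extend_apply]

theorem exists_fin_sum_mul_near_integral {X ι : Type*} [MeasurableSpace X] [Fintype ι]
    {μ : Measure X} [IsProbabilityMeasure μ] {A : Set X} (hA : ∀ᵐ x ∂μ, x ∈ A)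
    {f : ι → X → ℝ} (hf : ∀ i, Integrable (f i) μ) {ε : ℝ} (hε : 0 < ε) :
    ∃ (w : Fin (Fintype.card ι + 1) → ℝ) (x : Fin (Fintype.card ι + 1) → X),
      (∀ j, 0 ≤ w j) ∧ ∑ j, w j = 1 ∧ (∀ j, x j ∈ A) ∧
        ∀ i, |∑ j, w j * f i (x j) - ∫ y, f i y ∂μ| < ε := by
  set γ : X → ι → ℝ := fun y i => f i y
  have hγ : Integrable γ μ := Integrable.of_eval hf
  have hmem : ∫ y, γ y ∂μ ∈ closure (convexHull ℝ (γ '' A)) :=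
    (convex_convexHull ℝ _).closure.integral_mem isClosed_closure
      (hA.mono fun y hy => subset_closure (subset_convexHull ℝ _ ⟨y, hy, rfl⟩)) hγ
  obtain ⟨v, hv, hvε⟩ := Metric.mem_closure_iff.1 hmem ε hε
  rw [← finrank_fintype_fun_eq_card (R := ℝ)]
  obtain ⟨w, z, hw, hw1, hzγ, hwz⟩ := exists_fin_sum_smul_eq_of_mem_convexHull hv
  choose x hxA hxz using hzγ
  refine ⟨w, x, hw, hw1, hxA, fun i => ?_⟩
  calc |∑ j, w j * f i (x j) - ∫ y, f i y ∂μ| = |(v - ∫ y, γ y ∂μ) i| := by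
        simp [← hwz, ← hxz, eval_integral hf, γ]
    _ ≤ ‖v - ∫ y, γ y ∂μ‖ := norm_le_pi_norm (v - ∫ y, γ y ∂μ) i
    _ < ε := by rwa [← dist_eq_norm, dist_comm]

theorem pow_le_one_add_pow {t : ℝ} (ht : 0 ≤ t) {p d : ℕ} (hpd : p ≤ d) : t ^ p ≤ 1 + t ^ d := by
  rcases le_total t 1 with h | h
  · linarith [pow_le_one₀ ht h (n := p), pow_nonneg ht d]
  · linarith [pow_le_pow_right₀ h hpd]

theorem MeasureTheory.Integrable.of_norm_le_mul_one_add_norm_pow {E F : Type*}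
    [NormedAddCommGroup E] [MeasurableSpace E] [NormedAddCommGroup F] {μ : Measure E} [IsFiniteMeasure μ] {p d : ℕ}
    (hpd : p ≤ d) (hmom : Integrable (fun x => ‖x‖ ^ d) μ) {f : E → F}
    (hf : AEStronglyMeasurable f μ) {c : ℝ} (hfc : ∀ᵐ x ∂μ, ‖f x‖ ≤ c * (1 + ‖x‖ ^ p)) :
    Integrable f μ := by
  refine Integrable.mono' (((integrable_const 2).add hmom).const_mul |c|) hf ?_
  filter_upwards [hfc] with x hx
  have hp := pow_le_one_add_pow (norm_nonneg x) hpd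
  calc ‖f x‖ ≤ c * (1 + ‖x‖ ^ p) := hx
    _ ≤ |c| * (1 + ‖x‖ ^ p) := by gcongr; exact le_abs_self c
    _ ≤ |c| * (2 + ‖x‖ ^ d) := mul_le_mul_of_nonneg_left (by linarith) (abs_nonneg c)

theorem tendsto_mul_one_add_pow_nhds_zero {α : Type*} {l : Filter α} {a t : α → ℝ} {p d : ℕ}
    (hpd : p < d) {B : ℝ} (ha : ∀ k, 0 ≤ a k) (hB : ∀ k, a k * t k ^ d ≤ B)
    (ht : Tendsto t l atTop) : Tendsto (fun k => a k * (1 + t k ^ p)) l (𝓝 0) := by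
  refine squeeze_zero' ?_ ?_ (tendsto_const_nhds.div_atTop ht : Tendsto (fun k => 2 * B / t k) l _)
  · filter_upwards [ht.eventually_ge_atTop 0] with k hk
    exact mul_nonneg (ha k) (by positivity)
  · filter_upwards [ht.eventually_ge_atTop 1] with k hk
    have h1 : 1 + t k ^ p ≤ 2 * t k ^ (d - 1) := by
      linarith [one_le_pow₀ hk (n := d - 1), pow_le_pow_right₀ hk (Nat.le_sub_one_of_lt hpd)]
    have h2 : t k ^ (d - 1) * t k = t k ^ d := by rw [← pow_succ, Nat.sub_add_cancel (by omega)]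
    rw [le_div_iff₀ (by linarith)]
    calc a k * (1 + t k ^ p) * t k ≤ a k * (2 * t k ^ (d - 1)) * t k := by gcongr; exact ha k
      _ = 2 * (a k * t k ^ d) := by rw [← h2]; ring
      _ ≤ 2 * B := by linarith [hB k]

theorem tendsto_mul_nhds_zero_of_tendsto_norm_atTop {α E : Type*} [NormedAddCommGroup E]
    {l : Filter α} {a : α → ℝ} {x : α → E} {p d : ℕ} (hpd : p < d) {B : ℝ} (ha : ∀ k, 0 ≤ a k)
    (hB : ∀ k, a k * ‖x k‖ ^ d ≤ B) (hx : Tendsto (fun k => ‖x k‖) l atTop) {A : Set E}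
    (hxA : ∀ k, x k ∈ A) {f : E → ℝ} {c : ℝ} (hf : ∀ y ∈ A, |f y| ≤ c * (1 + ‖y‖ ^ p)) :
    Tendsto (fun k => a k * f (x k)) l (𝓝 0) := by
  have h := (tendsto_mul_one_add_pow_nhds_zero hpd ha hB hx).const_mul c
  rw [mul_zero] at h
  refine squeeze_zero_norm (fun k => ?_) h
  rw [Real.norm_eq_abs, abs_mul, abs_of_nonneg (ha k), mul_left_comm]
  exact mul_le_mul_of_nonneg_left (hf _ (hxA k)) (ha k)

theorem tendsto_of_tendsto_inv_one_add_norm {α E : Type*} [NormedAddCommGroup E]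
    [NormedSpace ℝ E] {l : Filter α} {x : α → E} {r : ℝ} {y : E}
    (hr : Tendsto (fun k => (1 + ‖x k‖)⁻¹) l (𝓝 r)) (hr0 : r ≠ 0)
    (hy : Tendsto (fun k => (1 + ‖x k‖)⁻¹ • x k) l (𝓝 y)) : Tendsto x l (𝓝 (r⁻¹ • y)) := by
  refine ((hr.inv₀ hr0).smul hy).congr fun k => ?_
  rw [smul_smul, inv_mul_cancel₀ (by positivity), one_smul]

theorem tendsto_norm_atTop_of_tendsto_inv_one_add_norm {α E : Type*} [NormedAddCommGroup E]
    {l : Filter α} {x : α → E} (hr : Tendsto (fun k => (1 + ‖x k‖)⁻¹) l (𝓝 0)) :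
    Tendsto (fun k => ‖x k‖) l atTop := by
  have h : Tendsto (fun k => 1 + ‖x k‖) l atTop := by
    refine (tendsto_inv_nhdsGT_zero.comp (tendsto_nhdsWithin_iff.2
      ⟨hr, Eventually.of_forall fun k => Set.mem_Ioi.2 (by positivity)⟩)).congr fun k => inv_inv _
  simpa using tendsto_atTop_add_const_left l (-1) h

theorem exists_isProbabilityMeasure_integral_eq_sum {ι X : Type*} [Fintype ι] [MeasurableSpace X]
    [MeasurableSingletonClass X] {A : Set X} (hA : MeasurableSet A) {b : ι → ℝ} {y : ι → X}
    (hb : ∀ j, 0 ≤ b j) (hb1 : ∑ j, b j = 1) (hyA : ∀ j, b j ≠ 0 → y j ∈ A) :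
    ∃ ν : Measure X, IsProbabilityMeasure ν ∧ (∀ᵐ z ∂ν, z ∈ A) ∧
      ∀ f : X → ℝ, Integrable f ν ∧ ∫ z, f z ∂ν = ∑ j, b j * f (y j) := by
  refine ⟨Measure.sum fun j => ENNReal.ofReal (b j) • Measure.dirac (y j),
    (hb1 ▸ hasSum_fintype b).isProbabilityMeasure_sum_dirac hb, Measure.ae_sum_iff.2 fun j => ?_,
    fun f => ⟨integrable_sum_dirac (fun j => ENNReal.ofReal_ne_top) Summable.of_finite, ?_⟩⟩
  · by_cases hbj : b j = 0
    · simp [hbj]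
    · exact Measure.ae_smul_measure ((ae_dirac_iff hA).2 (hyA j hbj)) _
  · rw [integral_sum_dirac fun j => ENNReal.ofReal_ne_top, tsum_fintype]
    simp_rw [ENNReal.toReal_ofReal (hb _), smul_eq_mul]

theorem exists_subseq_tendsto_or_tendsto_norm_atTop {ι E : Type*} [Fintype ι]
    [NormedAddCommGroup E] [NormedSpace ℝ E] [FiniteDimensional ℝ E] (x : ℕ → ι → E) :
    ∃ ψ : ℕ → ℕ, StrictMono ψ ∧ ∃ y : ι → E, ∀ j,
      Tendsto (fun k => x (ψ k) j) atTop (𝓝 (y j)) ∨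
        Tendsto (fun k => ‖x (ψ k) j‖) atTop atTop := by
  -- `z ↦ ((1 + ‖z‖)⁻¹ • z, (1 + ‖z‖)⁻¹)` maps `E` into the unit ball of `E × ℝ`
  set u : ℕ → ι → E × ℝ := fun k j => ((1 + ‖x k j‖)⁻¹ • x k j, (1 + ‖x k j‖)⁻¹)
  have hu : ∀ k, u k ∈ Metric.closedBall 0 1 := fun k => by
    refine mem_closedBall_zero_iff.2 ((pi_norm_le_iff_of_nonneg zero_le_one).2 fun j => ?_)
    have h : (1 + ‖x k j‖)⁻¹ * (1 + ‖x k j‖) = 1 := inv_mul_cancel₀ (by positivity)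
    refine max_le ?_ ?_
    · rw [norm_smul, norm_inv, Real.norm_of_nonneg (by positivity)]
      nlinarith [norm_nonneg (x k j), inv_nonneg.2 (by positivity : (0 : ℝ) ≤ 1 + ‖x k j‖)]
    · rw [norm_inv, Real.norm_of_nonneg (by positivity)]
      exact inv_le_one_of_one_le₀ (by simp)
  obtain ⟨b, -, ψ, hψ, hb⟩ := tendsto_subseq_of_bounded Metric.isBounded_closedBall hu
  refine ⟨ψ, hψ, fun j => ((b j).2)⁻¹ • (b j).1, fun j => ?_⟩
  have hbj := tendsto_pi_nhds.1 hb j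
  by_cases h0 : (b j).2 = 0
  · exact .inr (tendsto_norm_atTop_of_tendsto_inv_one_add_norm (h0 ▸ hbj.snd_nhds))
  · exact .inl (tendsto_of_tendsto_inv_one_add_norm hbj.snd_nhds h0 hbj.fst_nhds)

theorem exists_subseq_tendsto_atoms {ι E : Type*} [Fintype ι] [NormedAddCommGroup E]
    [NormedSpace ℝ E] [FiniteDimensional ℝ E] {d : ℕ} (hd : 0 < d) {B : ℝ}
    {w : ℕ → ι → ℝ} {x : ℕ → ι → E} (hw : ∀ k j, 0 ≤ w k j) (hw1 : ∀ k j, w k j ≤ 1)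
    (hB : ∀ k j, w k j * ‖x k j‖ ^ d ≤ B) :
    ∃ ψ : ℕ → ℕ, StrictMono ψ ∧ ∃ (b : ι → ℝ) (y : ι → E),
      (∀ j, Tendsto (fun k => w (ψ k) j) atTop (𝓝 (b j))) ∧
      ∀ j, Tendsto (fun k => x (ψ k) j) atTop (𝓝 (y j)) ∨
        (b j = 0 ∧ Tendsto (fun k => ‖x (ψ k) j‖) atTop atTop) := by
  obtain ⟨ψ₁, hψ₁, y, hy⟩ := exists_subseq_tendsto_or_tendsto_norm_atTop x
  have hwball : ∀ k, w (ψ₁ k) ∈ Metric.closedBall 0 1 := fun k =>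
    mem_closedBall_zero_iff.2 ((pi_norm_le_iff_of_nonneg zero_le_one).2 fun j =>
      (Real.norm_of_nonneg (hw _ j)).trans_le (hw1 _ j))
  obtain ⟨b, -, ψ₂, hψ₂, hb⟩ := tendsto_subseq_of_bounded Metric.isBounded_closedBall hwball
  refine ⟨ψ₁ ∘ ψ₂, hψ₁.comp hψ₂, b, y, tendsto_pi_nhds.1 hb, fun j => ?_⟩
  rcases hy j with h | h
  · exact .inl (h.comp hψ₂.tendsto_atTop)
  · have h' := h.comp hψ₂.tendsto_atTop
    -- an escaping atom loses its mass, because its `d`-th moment stays bounded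
    have hw0 : Tendsto (fun k => w (ψ₁ (ψ₂ k)) j * 1) atTop (𝓝 0) :=
      tendsto_mul_nhds_zero_of_tendsto_norm_atTop hd (fun k => hw _ j) (fun k => hB _ j) h'
        (A := Set.univ) (fun _ => trivial) (f := fun _ => 1) (c := 1) fun z _ => by norm_num
    simp only [mul_one] at hw0
    exact .inr ⟨tendsto_nhds_unique (tendsto_pi_nhds.1 hb j) hw0, h'⟩

theorem exists_seq_fin_sum_mul_sub_integral_tendsto_zero {X ι : Type*} [MeasurableSpace X]
    [Fintype ι] {μ : ℕ → Measure X} [∀ k, IsProbabilityMeasure (μ k)] {A : Set X}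
    (hA : ∀ k, ∀ᵐ x ∂μ k, x ∈ A) {f : ι → X → ℝ} (hf : ∀ k i, Integrable (f i) (μ k)) :
    ∃ (w : ℕ → Fin (Fintype.card ι + 1) → ℝ) (x : ℕ → Fin (Fintype.card ι + 1) → X),
      (∀ k j, 0 ≤ w k j) ∧ (∀ k, ∑ j, w k j = 1) ∧ (∀ k j, x k j ∈ A) ∧
        ∀ i, Tendsto (fun k => ∑ j, w k j * f i (x k j) - ∫ y, f i y ∂μ k) atTop (𝓝 0) := by
  choose w x hw hw1 hxA hwx using fun k =>
    exists_fin_sum_mul_near_integral (hA k) (hf k) (Nat.one_div_pos_of_nat (n := k))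
  exact ⟨w, x, hw, hw1, hxA, fun i =>
    squeeze_zero_norm (fun k => (hwx k i).le) tendsto_one_div_add_atTop_nhds_zero_nat⟩

theorem exists_isProbabilityMeasure_limit_of_atoms {ι E : Type*} [Fintype ι]
    [NormedAddCommGroup E] [NormedSpace ℝ E] [FiniteDimensional ℝ E] [MeasurableSpace E]
    [BorelSpace E] {A : Set E} (hA : IsClosed A) {p d : ℕ} (hpd : p < d) {B : ℝ}
    {w : ℕ → ι → ℝ} {x : ℕ → ι → E} (hw : ∀ k j, 0 ≤ w k j) (hw1 : ∀ k, ∑ j, w k j = 1)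
    (hxA : ∀ k j, x k j ∈ A) (hB : ∀ k, ∑ j, w k j * ‖x k j‖ ^ d ≤ B) :
    ∃ ν : Measure E, IsProbabilityMeasure ν ∧ (∀ᵐ z ∂ν, z ∈ A) ∧
      (∀ f : E → ℝ, Integrable f ν) ∧
      (∀ f : E → ℝ, Continuous f → ∀ c, (∀ z ∈ A, |f z| ≤ c * (1 + ‖z‖ ^ p)) → ∀ s,
        Tendsto (fun k => ∑ j, w k j * f (x k j)) atTop (𝓝 s) → ∫ z, f z ∂ν = s) ∧
      (∀ f : E → ℝ, Continuous f → (∀ z ∈ A, 0 ≤ f z) → ∀ (c : ℕ → ℝ) (c₀ : ℝ),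
        (∀ k, ∑ j, w k j * f (x k j) ≤ c k) → Tendsto c atTop (𝓝 c₀) →
          ∫ z, f z ∂ν ≤ c₀) := by
  have hwB : ∀ k j, w k j * ‖x k j‖ ^ d ≤ B := fun k j =>
    (Finset.single_le_sum (f := fun j => w k j * ‖x k j‖ ^ d)
      (fun j _ => mul_nonneg (hw k j) (by positivity)) (Finset.mem_univ j)).trans (hB k)
  have hw1' : ∀ k j, w k j ≤ 1 := fun k j =>
    hw1 k ▸ Finset.single_le_sum (fun j _ => hw k j) (Finset.mem_univ j)
  obtain ⟨ψ, hψ, b, y, hb, hy⟩ := exists_subseq_tendsto_atoms (by omega) hw hw1' hwB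
  have hby : ∀ j, b j ≠ 0 → Tendsto (fun k => x (ψ k) j) atTop (𝓝 (y j)) := fun j hj =>
    (hy j).resolve_right fun h => hj h.1
  have hlim : ∀ f : E → ℝ, Continuous f → ∀ c, (∀ z ∈ A, |f z| ≤ c * (1 + ‖z‖ ^ p)) →
      Tendsto (fun k => ∑ j, w (ψ k) j * f (x (ψ k) j)) atTop (𝓝 (∑ j, b j * f (y j))) := by
    refine fun f hf c hfc => tendsto_finsetSum _ fun j _ => ?_
    rcases hy j with h | ⟨hbj, h⟩
    · exact (hb j).mul ((hf.tendsto _).comp h)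
    · rw [hbj, zero_mul]
      exact tendsto_mul_nhds_zero_of_tendsto_norm_atTop hpd (fun k => hw _ j) (fun k => hwB _ j)
        h (fun k => hxA _ j) hfc
  have hb1 : ∑ j, b j = 1 := by
    simpa using tendsto_nhds_unique (hlim (fun _ => 1) continuous_const 1 fun z _ => by
      norm_num) (by simp [hw1])
  obtain ⟨ν, hν, hνA, hνf⟩ := exists_isProbabilityMeasure_integral_eq_sum hA.measurableSet
    (fun j => ge_of_tendsto' (hb j) fun k => hw _ j) hb1
    fun j hj => hA.mem_of_tendsto (hby j hj) (Eventually.of_forall fun k => hxA _ j)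
  refine ⟨ν, hν, hνA, fun f => (hνf f).1, fun f hf c hfc s hs => ?_,
    fun f hf hf0 c c₀ hc hc₀ => ?_⟩
  · rw [(hνf f).2]
    exact tendsto_nhds_unique (hlim f hf c hfc) (hs.comp hψ.tendsto_atTop)
  · rw [(hνf f).2]
    -- drop the atoms of vanishing limit mass: the remaining ones converge
    refine le_of_tendsto_of_tendsto' (f := fun k => ∑ j, if b j = 0 then 0 else
      w (ψ k) j * f (x (ψ k) j)) (tendsto_finsetSum _ fun j _ => ?_)
      (hc₀.comp hψ.tendsto_atTop) fun k => (Finset.sum_le_sum fun j _ => ?_).trans (hc _)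
    · by_cases hbj : b j = 0
      · simp [hbj]
      · simpa [hbj] using (hb j).mul ((hf.tendsto _).comp (hby j hbj))
    · split_ifs
      exacts [mul_nonneg (hw _ j) (hf0 _ (hxA _ j)), le_rfl]

theorem exists_isProbabilityMeasure_integral_eq_limit {ι E : Type*} [Fintype ι]
    [NormedAddCommGroup E] [NormedSpace ℝ E] [FiniteDimensional ℝ E] [MeasurableSpace E]
    [BorelSpace E] {A : Set E} (hA : IsClosed A) {p d : ℕ} (hpd : p < d) {M : ℝ}
    {μ : ℕ → Measure E} [∀ k, IsProbabilityMeasure (μ k)] (hμA : ∀ k, ∀ᵐ z ∂μ k, z ∈ A)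
    (hμd : ∀ k, Integrable (fun z => ‖z‖ ^ d) (μ k)) (hμM : ∀ k, ∫ z, ‖z‖ ^ d ∂μ k ≤ M)
    {f : ι → E → ℝ} (hf : ∀ i, Continuous (f i)) {c : ι → ℝ}
    (hfc : ∀ i, ∀ z ∈ A, |f i z| ≤ c i * (1 + ‖z‖ ^ p)) {s : ι → ℝ}
    (hs : ∀ i, Tendsto (fun k => ∫ z, f i z ∂μ k) atTop (𝓝 (s i))) :
    ∃ ν : Measure E, IsProbabilityMeasure ν ∧ (∀ᵐ z ∂ν, z ∈ A) ∧
      Integrable (fun z => ‖z‖ ^ d) ν ∧ ∫ z, ‖z‖ ^ d ∂ν ≤ M ∧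
      ∀ i, Integrable (f i) ν ∧ ∫ z, f i z ∂ν = s i := by
  have hfμ : ∀ k i, Integrable (f i) (μ k) := fun k i =>
    (hμd k).of_norm_le_mul_one_add_norm_pow hpd.le (hf i).aestronglyMeasurable
      ((hμA k).mono fun z hz => hfc i z hz)
  obtain ⟨w, x, hw, hw1, hxA, hwx⟩ := exists_seq_fin_sum_mul_sub_integral_tendsto_zero hμA
    (f := fun o : Option ι => o.elim (fun z => ‖z‖ ^ d) f) fun k o => o.rec (hμd k) (hfμ k)
  set m : ℕ → ℝ := fun k => ∑ j, w k j * ‖x k j‖ ^ d - ∫ z, ‖z‖ ^ d ∂μ k + M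
  have hm : Tendsto m atTop (𝓝 M) := by simpa using (hwx none).add_const M
  have hwm : ∀ k, ∑ j, w k j * ‖x k j‖ ^ d ≤ m k := fun k => by linarith [hμM k]
  obtain ⟨B, hB⟩ := hm.bddAbove_range
  obtain ⟨ν, hν, hνA, hνf, hνeq, hνle⟩ := exists_isProbabilityMeasure_limit_of_atoms hA hpd hw
    hw1 hxA fun k => (hwm k).trans (hB ⟨k, rfl⟩)
  refine ⟨ν, hν, hνA, hνf _, hνle _ (by fun_prop) (fun z _ => by positivity) m M hwm hm,
    fun i => ⟨hνf _, hνeq _ (hf i) _ (hfc i) _ ?_⟩⟩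
  simpa using (hwx (some i)).add (hs i)

theorem gmp_infimum_attained_general
    (n d : ℕ) (hd : 1 ≤ d) (M : ℝ)
    (φ : EuclideanSpace ℝ (Fin n) → ℝ) (hφc : Continuous φ)
    (C₀ : ℝ)
    (hφ : ∀ x : EuclideanSpace ℝ (Fin n), (∀ i, 0 ≤ x i) →
        0 ≤ φ x ∧ φ x ≤ C₀ * (1 + ‖x‖ ^ (d - 1)))
    (m : ℕ) (g : Fin m → EuclideanSpace ℝ (Fin n) → ℝ) (hgc : ∀ i, Continuous (g i))
    (C : Fin m → ℝ)
    (hg : ∀ i, ∀ x : EuclideanSpace ℝ (Fin n), (∀ j, 0 ≤ x j) →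
        |g i x| ≤ C i * (1 + ‖x‖ ^ (d - 1)))
    (q : Fin m → ℝ)
    (F : Set (Measure (EuclideanSpace ℝ (Fin n))))
    (hF : F = {μ | IsProbabilityMeasure μ ∧
        μ {x | ¬ ∀ i, 0 ≤ x i} = 0 ∧
        (∀ i, Integrable (g i) μ ∧ ∫ x, g i x ∂μ = q i) ∧
        Integrable (fun x => ‖x‖ ^ d) μ ∧ ∫ x, ‖x‖ ^ d ∂μ ≤ M})
    (hne : F.Nonempty) :
    ∃ μ ∈ F, ∫ x, φ x ∂μ = sInf ((fun ν => ∫ x, φ x ∂ν) '' F) := by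
  set A : Set (EuclideanSpace ℝ (Fin n)) := {x | ∀ i, 0 ≤ x i}
  have hA : IsClosed A := by
    simp only [A, Set.ofPred_forall]
    exact isClosed_iInter fun i => isClosed_le continuous_const (EuclideanSpace.proj i).continuous
  have hbdd : BddBelow ((fun ν => ∫ x, φ x ∂ν) '' F) := ⟨0, by
    rintro _ ⟨μ, hμ, rfl⟩
    rw [hF] at hμ
    exact integral_nonneg_of_ae ((ae_iff.2 hμ.2.1).mono fun x hx => (hφ x hx).1)⟩
  obtain ⟨v, -, hv, hvF⟩ := exists_seq_tendsto_sInf (hne.image _) hbdd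
  choose μ hμF hμv using hvF
  simp only [hF, Set.mem_ofPred_eq] at hμF
  choose hμ hμA hμg hμd hμM using hμF
  obtain ⟨ν, hν, hνA, hνd, hνM, hνf⟩ := exists_isProbabilityMeasure_integral_eq_limit hA
    (Nat.sub_lt hd one_pos) (fun k => ae_iff.2 (hμA k)) hμd hμM
    (f := fun o : Option (Fin m) => o.elim φ g) (c := fun o : Option (Fin m) => o.elim C₀ C)
    (s := fun o : Option (Fin m) => o.elim _ q)
    (fun o => o.rec hφc hgc)
    (fun o => o.rec (fun x hx => (abs_of_nonneg (hφ x hx).1).trans_le (hφ x hx).2) hg)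
    fun o => o.rec (hv.congr fun k => (hμv k).symm) fun i => by simp [(hμg _ i).2]
  refine ⟨ν, ?_, (hνf none).2⟩
  rw [hF]
  exact ⟨hν, ae_iff.1 hνA, fun i => hνf (some i), hνd, hνM⟩

/-- Minimization half of Lemma 3: the infimum of the option-pricing GMP is attained. -/
theorem gmp_infimum_attained
    (n d : ℕ) (hn : 1 ≤ n) (hd : 1 ≤ d) (M : ℝ) (hM : 0 < M)
    (φ : EuclideanSpace ℝ (Fin n) → ℝ) (hφc : Continuous φ)
    (C₀ : ℝ) (hC₀ : 0 ≤ C₀)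
    (hφ : ∀ x : EuclideanSpace ℝ (Fin n), (∀ i, 0 ≤ x i) →
        0 ≤ φ x ∧ φ x ≤ C₀ * (1 + ‖x‖ ^ (d - 1)))
    (m : ℕ) (g : Fin m → EuclideanSpace ℝ (Fin n) → ℝ) (hgc : ∀ i, Continuous (g i))
    (C : Fin m → ℝ) (hC : ∀ i, 0 ≤ C i)
    (hg : ∀ i, ∀ x : EuclideanSpace ℝ (Fin n), (∀ j, 0 ≤ x j) →
        |g i x| ≤ C i * (1 + ‖x‖ ^ (d - 1)))
    (q : Fin m → ℝ)
    (F : Set (Measure (EuclideanSpace ℝ (Fin n))))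
    (hF : F = {μ | IsProbabilityMeasure μ ∧
        μ {x | ¬ ∀ i, 0 ≤ x i} = 0 ∧
        (∀ i, Integrable (g i) μ ∧ ∫ x, g i x ∂μ = q i) ∧
        Integrable (fun x => ‖x‖ ^ d) μ ∧ ∫ x, ‖x‖ ^ d ∂μ ≤ M})
    (hne : F.Nonempty) :
    ∃ μ ∈ F, ∫ x, φ x ∂μ = sInf ((fun ν => ∫ x, φ x ∂ν) '' F) :=
  gmp_infimum_attained_general n d hd M φ hφc C₀ hφ m g hgc C hg q F hF hne
end

section
/- Let 0 ≤ k₁ < k₂ and a > 0 be real numbers, and let F be the set of Borel probability measures μ on [0,∞) satisfying ∫ max(0, x − k₂) dμ(x) = a. Then: (i) F is nonempty; (ii) inf { ∫ max(0, x − k₁) dμ(x) : μ ∈ F } = a; and (iii) every μ ∈ F satisfies ∫ max(0, x − k₁) dμ(x) > a. In particular, the infimum is not attained by any measure in F. -/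
/-!
The gap `(x - k₁)⁺ - (x - k₂)⁺` is nonnegative and equals `k₂ - k₁ > 0` wherever `(x - k₂)⁺ > 0`,
a set of positive mass once `∫ (x - k₂)⁺ dμ = a > 0`; so every feasible `μ` prices the `k₁`-call
strictly above `a`. Conversely, the measure with mass `p` at `k₂ + a / p` and `1 - p` at `0` is
feasible and prices the `k₁`-call at `a + p (k₂ - k₁)`, which tends to `a` as `p → 0` while the
atom escapes to infinity, so the infimum is `a` but no measure attains it.
-/

open MeasureTheory ProbabilityTheory unitInterval

section CallPayoff

variable {μ : Measure ℝ} {k₁ k₂ : ℝ}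

lemma integrable_max_sub_of_integrable_max_sub [IsFiniteMeasure μ]
    (h : Integrable (fun x => max 0 (x - k₂)) μ) :
    Integrable (fun x => max 0 (x - k₁)) μ := by
  have hdiff : Integrable (fun x => max 0 (x - k₁) - max 0 (x - k₂)) μ := by
    refine .of_bound (by fun_prop) |k₂ - k₁| (.of_forall fun x => ?_)
    rw [Real.norm_eq_abs, max_comm 0, max_comm 0, ← sub_sub_sub_cancel_left k₁ k₂ x]
    exact abs_max_sub_max_le_abs _ _ 0
  exact (hdiff.add h).congr (.of_forall fun x => sub_add_cancel _ _)

lemma integral_max_sub_lt_of_lt [IsFiniteMeasure μ] (hk : k₁ < k₂)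
    (h : Integrable (fun x => max 0 (x - k₂)) μ) (hpos : 0 < ∫ x, max 0 (x - k₂) ∂μ) :
    ∫ x, max 0 (x - k₂) ∂μ < ∫ x, max 0 (x - k₁) ∂μ := by
  set g : ℝ → ℝ := fun x => max 0 (x - k₁) - max 0 (x - k₂)
  have hg_int : Integrable g μ := (integrable_max_sub_of_integrable_max_sub h).sub h
  have hg_nonneg : 0 ≤ g := fun x => sub_nonneg.2 (max_le_max le_rfl (by linarith))
  have h_supp : Function.support (fun x => max 0 (x - k₂)) ⊆ Function.support g := by
    intro x hx
    have hx : k₂ < x := by simpa [Function.mem_support, ne_comm, max_eq_iff] using hx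
    simp only [g, Function.mem_support, max_eq_right (by linarith : 0 ≤ x - k₁),
      max_eq_right (by linarith : 0 ≤ x - k₂)]
    linarith
  have hg_pos : 0 < ∫ x, g x ∂μ := by
    rw [integral_pos_iff_support_of_nonneg hg_nonneg hg_int]
    rw [integral_pos_iff_support_of_nonneg (f := fun x => max 0 (x - k₂))
      (fun x => le_max_left _ _) h] at hpos
    exact hpos.trans_le (measure_mono h_supp)
  have : ∫ x, g x ∂μ = ∫ x, max 0 (x - k₁) ∂μ - ∫ x, max 0 (x - k₂) ∂μ :=
    integral_sub (integrable_max_sub_of_integrable_max_sub h) h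
  linarith

end CallPayoff

def feasibleMeasures (k a : ℝ) : Set (Measure ℝ) :=
  {μ | IsProbabilityMeasure μ ∧ μ (Set.Iio 0) = 0 ∧
    Integrable (fun x => max 0 (x - k)) μ ∧ ∫ x, max 0 (x - k) ∂μ = a}

section Feasible

variable {k k₁ k₂ a t : ℝ}

lemma lt_integral_max_sub_of_mem_feasibleMeasures {μ : Measure ℝ} (hk : k₁ < k₂) (ha : 0 < a)
    (hμ : μ ∈ feasibleMeasures k₂ a) : a < ∫ x, max 0 (x - k₁) ∂μ := by
  obtain ⟨_, -, hint, rfl⟩ := hμ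
  exact integral_max_sub_lt_of_lt hk hint ha

lemma integral_max_sub_bernoulliMeasure (hk : 0 ≤ k) (hkt : k ≤ t) (p : I) :
    ∫ x, max 0 (x - k) ∂Ber(t, 0, p) = p * (t - k) := by
  rw [integral_bernoulliMeasure, max_eq_right (sub_nonneg.2 hkt),
    max_eq_left (by linarith : (0 : ℝ) - k ≤ 0), smul_eq_mul, smul_zero, add_zero]

lemma bernoulliMeasure_mem_feasibleMeasures (hk : 0 ≤ k) (ha : 0 ≤ a) (p : I)
    (hp : 0 < (p : ℝ)) : Ber(k + a / p, 0, p) ∈ feasibleMeasures k a := by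
  have hkt : k ≤ k + a / p := le_add_of_nonneg_right (div_nonneg ha hp.le)
  refine ⟨inferInstance, ?_, integrable_bernoulliMeasure _ _ _ _, ?_⟩
  · exact bernoulliMeasure_apply_of_notMem_of_notMem p measurableSet_Iio
      (by simpa using hk.trans hkt) (by simp)
  · rw [integral_max_sub_bernoulliMeasure hk hkt, add_sub_cancel_left, mul_div_cancel₀ _ hp.ne']

lemma integral_max_sub_bernoulliMeasure_of_le (hk₁ : 0 ≤ k₁) (hk : k₁ ≤ k₂) (ha : 0 ≤ a)
    (p : I) (hp : 0 < (p : ℝ)) :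
    ∫ x, max 0 (x - k₁) ∂Ber(k₂ + a / p, 0, p) = a + p * (k₂ - k₁) := by
  have hkt : k₁ ≤ k₂ + a / p := hk.trans (le_add_of_nonneg_right (div_nonneg ha hp.le))
  rw [integral_max_sub_bernoulliMeasure hk₁ hkt]
  field_simp
  ring

end Feasible

/-- Proposition of Section 3.2: without a higher-moment bound the infimum of the
option-pricing GMP equals `a` but is not attained by any feasible measure. -/
theorem gmp_infimum_not_attained
    (k₁ k₂ a : ℝ) (hk₁ : 0 ≤ k₁) (hk : k₁ < k₂) (ha : 0 < a)
    (F : Set (Measure ℝ))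
    (hF : F = {μ | IsProbabilityMeasure μ ∧ μ (Set.Iio 0) = 0 ∧
        Integrable (fun x => max 0 (x - k₂)) μ ∧ ∫ x, max 0 (x - k₂) ∂μ = a}) :
    F.Nonempty ∧
    sInf ((fun μ => ∫ x, max 0 (x - k₁) ∂μ) '' F) = a ∧
    ∀ μ ∈ F, a < ∫ x, max 0 (x - k₁) ∂μ := by
  obtain rfl : F = feasibleMeasures k₂ a := hF
  have hk₂ : 0 ≤ k₂ := hk₁.trans hk.le
  have lower (μ) (hμ : μ ∈ feasibleMeasures k₂ a) :=
    lt_integral_max_sub_of_mem_feasibleMeasures hk ha hμ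
  have feasible (p : I) (hp : 0 < (p : ℝ)) :=
    bernoulliMeasure_mem_feasibleMeasures hk₂ ha.le p hp
  have dirac_feasible := feasible 1 (by simp)
  refine ⟨⟨_, dirac_feasible⟩, ?_, lower⟩
  refine csInf_eq_of_forall_ge_of_forall_gt_exists_lt ⟨_, _, dirac_feasible, rfl⟩
    (by rintro _ ⟨μ, hμ, rfl⟩; exact (lower μ hμ).le) fun w hw => ?_
  obtain ⟨c, hc, hcw⟩ := exists_pos_mul_lt (sub_pos.2 hw) (k₂ - k₁)
  let p : I := ⟨min 1 c, le_min zero_le_one hc.le, min_le_left _ _⟩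
  have hp : 0 < (p : ℝ) := lt_min one_pos hc
  refine ⟨_, ⟨_, feasible p hp, rfl⟩, ?_⟩
  dsimp only
  rw [integral_max_sub_bernoulliMeasure_of_le hk₁ hk.le ha.le p hp]
  nlinarith [min_le_right 1 c]
end

section
/- Let 0 ≤ k₁ < k₂ and a > 0 be real numbers. For every integer n ≥ 1 define the measure μₙ = (1 − 1/n)·δ_{k₁} + (1/n)·δ_{k₂ + n·a} on [0,∞), where δ_x is the Dirac measure at x. Then μₙ is a Borel probability measure on [0,∞) satisfying ∫ max(0, x − k₂) dμₙ(x) = a and ∫ max(0, x − k₁) dμₙ(x) = a + (k₂ − k₁)/n. In particular, (μₙ) is a feasible minimizing sequence whose objective values converge to a. -/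
/-! The atom of mass `1/n` at `k₂ + n·a` lies `n·a` beyond `k₂`, so it contributes exactly `a` to
the call with strike `k₂`, while the atom at `k₁` is out of the money for both strikes; integrals
against a two-point measure are just weighted sums of point evaluations. -/

open MeasureTheory

section TwoPointMeasure

variable {α : Type*} [MeasurableSpace α]

theorem isProbabilityMeasure_ofReal_smul_dirac_add {p : ℝ} (hp₀ : 0 ≤ p) (hp₁ : p ≤ 1) (x y : α) :
    IsProbabilityMeasure
      (ENNReal.ofReal (1 - p) • Measure.dirac x + ENNReal.ofReal p • Measure.dirac y) := by
  constructor
  simp only [Measure.add_apply, Measure.smul_apply, measure_univ, smul_eq_mul, mul_one]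
  rw [← ENNReal.ofReal_add (by linarith) hp₀, sub_add_cancel, ENNReal.ofReal_one]

theorem integral_smul_dirac_add_smul_dirac [MeasurableSingletonClass α] {E : Type*}
    [NormedAddCommGroup E] [NormedSpace ℝ E] [CompleteSpace E]
    {c d : ENNReal} (hc : c ≠ ⊤) (hd : d ≠ ⊤) (x y : α) (f : α → E) :
    ∫ z, f z ∂(c • Measure.dirac x + d • Measure.dirac y) = c.toReal • f x + d.toReal • f y := by
  rw [integral_add_measure ((integrable_dirac enorm_lt_top).smul_measure hc)
      ((integrable_dirac enorm_lt_top).smul_measure hd),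
    integral_smul_measure, integral_smul_measure, integral_dirac, integral_dirac]

theorem smul_dirac_add_smul_dirac_apply_eq_zero [MeasurableSingletonClass α]
    {c d : ENNReal} {x y : α} {s : Set α} (hx : x ∉ s) (hy : y ∉ s) :
    (c • Measure.dirac x + d • Measure.dirac y) s = 0 := by
  simp [Measure.dirac_apply, hx, hy]

end TwoPointMeasure

/-- The explicit minimizing sequence `μₙ = (1 - 1/n)·δ_{k₁} + (1/n)·δ_{k₂ + n·a}`
from the proof of the Proposition of Section 3.2. -/
theorem minimizing_sequence_feasible
    (k₁ k₂ a : ℝ) (hk₁ : 0 ≤ k₁) (hk : k₁ < k₂) (ha : 0 < a)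
    (n : ℕ) (hn : 1 ≤ n)
    (μ : Measure ℝ)
    (hμ : μ = ENNReal.ofReal (1 - 1 / (n : ℝ)) • Measure.dirac k₁ +
          ENNReal.ofReal (1 / (n : ℝ)) • Measure.dirac (k₂ + n * a)) :
    IsProbabilityMeasure μ ∧
    μ (Set.Iio 0) = 0 ∧
    ∫ x, max 0 (x - k₂) ∂μ = a ∧
    ∫ x, max 0 (x - k₁) ∂μ = a + (k₂ - k₁) / n := by
  have hn₀ : (0 : ℝ) < n := by exact_mod_cast hn
  have hp₀ : (0 : ℝ) ≤ 1 / n := by positivity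
  have hp₁ : 1 / (n : ℝ) ≤ 1 := by rw [div_le_one hn₀]; exact_mod_cast hn
  have hjump : k₂ ≤ k₂ + n * a := by nlinarith
  have hcall : ∀ k, ∫ x, max 0 (x - k) ∂μ =
      (1 - 1 / n) * max 0 (k₁ - k) + 1 / n * max 0 (k₂ + n * a - k) := fun k => by
    rw [hμ, integral_smul_dirac_add_smul_dirac ENNReal.ofReal_ne_top ENNReal.ofReal_ne_top,
      ENNReal.toReal_ofReal (by linarith), ENNReal.toReal_ofReal hp₀, smul_eq_mul, smul_eq_mul]
  refine ⟨hμ ▸ isProbabilityMeasure_ofReal_smul_dirac_add hp₀ hp₁ _ _,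
    hμ ▸ smul_dirac_add_smul_dirac_apply_eq_zero (by simpa using hk₁)
      (by simpa using hk₁.trans hk.le |>.trans hjump), ?_, ?_⟩
  · rw [hcall, max_eq_left (by linarith), max_eq_right (by linarith)]
    field_simp
    ring
  · rw [hcall, max_eq_left (by linarith), max_eq_right (by linarith)]
    field_simp
    ring
end

section
/- Let 0 ≤ k₁ < k₂ be real numbers and let μ be a finite Borel measure on [0,∞) such that ∫ max(0, x − k₁) dμ(x) = ∫ max(0, x − k₂) dμ(x) (both integrals finite). Then μ([k₂, ∞)) = 0, and consequently ∫ max(0, x − k₂) dμ(x) = 0. -/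
open MeasureTheory

/-- Key step of the non-attainment Proposition of Section 3.2: equality of two call prices
with distinct strikes forces the measure to place no mass at or above the larger strike. -/
theorem equal_call_prices_no_mass_above_strike
    (k₁ k₂ : ℝ) (hk₁ : 0 ≤ k₁) (hk : k₁ < k₂)
    (μ : Measure ℝ) [IsFiniteMeasure μ] (hsupp : μ (Set.Iio 0) = 0)
    (h₁ : Integrable (fun x => max 0 (x - k₁)) μ)
    (h₂ : Integrable (fun x => max 0 (x - k₂)) μ)
    (heq : ∫ x, max 0 (x - k₁) ∂μ = ∫ x, max 0 (x - k₂) ∂μ) :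
    μ (Set.Ici k₂) = 0 ∧ ∫ x, max 0 (x - k₂) ∂μ = 0 := by
  set g : ℝ → ℝ := fun x => max 0 (x - k₁) - max 0 (x - k₂) with hg
  have hgnn : ∀ x, 0 ≤ g x := by
    intro x
    simp only [hg]
    rcases le_total x k₁ with h | h
    · have h2 : x - k₂ ≤ 0 := by linarith
      simp [max_eq_left h2, max_eq_left (by linarith : x - k₁ ≤ 0)]
    · have h1 : max 0 (x - k₁) = x - k₁ ∨ max 0 (x - k₁) = 0 := max_choice _ _ |>.symm
      have : max 0 (x - k₂) ≤ max 0 (x - k₁) := max_le_max le_rfl (by linarith)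
      linarith
  have hgint : Integrable g μ := h₁.sub h₂
  have hgzero : ∫ x, g x ∂μ = 0 := by
    rw [integral_sub h₁ h₂, heq, sub_self]
  have hae : g =ᵐ[μ] 0 := by
    have := (integral_eq_zero_iff_of_nonneg (fun x => hgnn x) hgint).mp hgzero
    exact this
  have hnull : μ {x | g x ≠ 0} = 0 := by
    have := hae
    rw [Filter.EventuallyEq, ae_iff] at this
    simpa using this
  have hsub : Set.Ici k₂ ⊆ {x | g x ≠ 0} := by
    intro x hx
    have hx' : k₂ ≤ x := hx
    have : g x = k₂ - k₁ := by
      simp only [hg]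
      rw [max_eq_right (by linarith : (0:ℝ) ≤ x - k₁), max_eq_right (by linarith : (0:ℝ) ≤ x - k₂)]
      ring
    simp only [Set.mem_setOf_eq, this]
    linarith
  have hmu : μ (Set.Ici k₂) = 0 := measure_mono_null hsub hnull
  refine ⟨hmu, ?_⟩
  have hsub2 : {x | max 0 (x - k₂) ≠ 0} ⊆ Set.Ici k₂ := by
    intro x hx
    simp only [Set.mem_setOf_eq] at hx
    by_contra h
    simp only [Set.mem_Ici, not_le] at h
    exact hx (max_eq_left (by linarith : x - k₂ ≤ 0))
  have hz : (fun x => max 0 (x - k₂)) =ᵐ[μ] 0 := by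
    rw [Filter.EventuallyEq, ae_iff]
    simp only [Pi.zero_apply]
    exact measure_mono_null hsub2 hmu
  exact integral_eq_zero_of_ae hz
end

section
/- Let k > 0 and B > k be real numbers, and let μ be a Borel probability measure on [0,∞) with ∫ max(0, x − k) dμ(x) = 0 and m := ∫ x² dμ(x) satisfying 0 < m < k². If c₁, c₂ ∈ ℝ are such that c₁·max(0, x − k) + c₂·(x² − m) ≥ 0 for every x ∈ [0, B], then c₂ = 0 and c₁ ≥ 0; that is, every such nonnegative function in the span is a nonnegative multiple of the payoff x ↦ max(0, x − k). -/
open MeasureTheory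

/-- Case 1 (a = 0) of the core-variety analysis of Section 4.1: if
`c₁·max(0, x-k) + c₂·(x² - m) ≥ 0` on `[0, B]` with `B > k` and `0 < m < k²`,
then `c₂ = 0` and `c₁ ≥ 0`. -/
theorem core_variety_case_a_zero
    (k B : ℝ) (hk : 0 < k) (hB : k < B)
    (μ : Measure ℝ) [IsProbabilityMeasure μ] (hsupp : μ (Set.Iio 0) = 0)
    (hcall : ∫ x, max 0 (x - k) ∂μ = 0)
    (m : ℝ) (hm : m = ∫ x, x ^ 2 ∂μ) (hm0 : 0 < m) (hmk : m < k ^ 2)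
    (c₁ c₂ : ℝ)
    (hpos : ∀ x ∈ Set.Icc 0 B, 0 ≤ c₁ * max 0 (x - k) + c₂ * (x ^ 2 - m)) :
    c₂ = 0 ∧ 0 ≤ c₁ := by
  have h0 := hpos 0 ⟨le_refl 0, by linarith⟩
  have hkk := hpos k ⟨hk.le, hB.le⟩
  have hBB := hpos B ⟨by linarith, le_refl B⟩
  rw [max_eq_left (by linarith)] at h0
  rw [max_eq_left (by linarith)] at hkk
  rw [max_eq_right (by linarith)] at hBB
  have hc2 : c₂ = 0 := by nlinarith
  subst hc2
  constructor
  · rfl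
  · nlinarith
end

section
/- Let k ≥ 0, a > 0, M > 0, α > 0 and x > k be real numbers such that α·(x − k) = a and α·x² ≤ M. Then M ≥ 4·a·k, and x ≤ (M + √(M·(M − 4·a·k)))/(2·a). -/
/-- The algebraic support bound of Section 4.2: an atom of weight `α` at `x > k`
accounting for a call price `a` at strike `k` and respecting the second-moment
bound `M` satisfies `x ≤ (M + √(M(M - 4ak)))/(2a)`. -/
theorem atom_support_bound
    (k a M α x : ℝ) (hk : 0 ≤ k) (ha : 0 < a) (hM : 0 < M) (hα : 0 < α) (hx : k < x)
    (hprice : α * (x - k) = a) (hmom : α * x ^ 2 ≤ M) :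
    4 * a * k ≤ M ∧ x ≤ (M + Real.sqrt (M * (M - 4 * a * k))) / (2 * a) := by
  have hxk : 0 < x - k := by linarith
  have h1 : a * x ^ 2 ≤ M * (x - k) := by
    have := mul_le_mul_of_nonneg_right hmom hxk.le
    nlinarith [sq_nonneg x]
  have hD : 0 ≤ M * (M - 4 * a * k) := by nlinarith [sq_nonneg (2 * a * x - M)]
  have hfirst : 4 * a * k ≤ M := by nlinarith
  refine ⟨hfirst, ?_⟩
  rw [le_div_iff₀ (by linarith : (0:ℝ) < 2 * a)]
  have hs := Real.sqrt_nonneg (M * (M - 4 * a * k))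
  have hsq := Real.sq_sqrt hD
  nlinarith [sq_nonneg (2 * a * x - M - Real.sqrt (M * (M - 4 * a * k)))]
end

section
/- Let 0 ≤ k₁ ≤ k₂ ≤ ⋯ ≤ k_N be strikes with prices q₁, …, q_N ∈ ℝ such that q_N > 0, let k ≥ 0, let d ≥ 2 be an even integer and M > 0. Let F be the set of Borel probability measures μ on [0,∞) with ∫ max(0, x − k_j) dμ(x) = q_j for all j ∈ [N] and ∫ x^d dμ(x) ≤ M. If the infimum of ∫ max(0, x − k) dμ(x) over F is attained, then it is attained by a finitely atomic measure μ* (a finite sum of positive multiples of Dirac measures) such that the restriction of μ* to (k_N, ∞) consists of exactly one atom (i.e. there is exactly one point x* > k_N with μ*({x*}) > 0 and μ*((k_N, ∞) \ {x*}) = 0), and moreover each of the intervals [0, k₁], [k₁, k₂], …, [k_{N−1}, k_N] contains at most one atom of μ*. -/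
/-!
Every constraint payoff `(x - k_j)⁺` is affine on an interval containing no strike in its interior,
while `x ^ d` and the objective `(x - k)⁺` are convex. So replacing the part of a measure living
on such an interval by one atom of the same mass at its barycentre keeps the mass and all the
constraints, and by Jensen's inequality does not increase the moment or the objective: an optimal
measure stays feasible and optimal. Doing this on the pieces cut out by the strikes makes an
optimal measure finitely atomic; then, as long as two atoms share one of the intervals
`[0, k₁]`, `[k_j, k_{j+1}]`, `[k_N, ∞)`, merging the atoms of that interval lowers their number.
Finally `q_N > 0` forces an atom above `k_N`.
-/

open MeasureTheory Set Function
open scoped NNReal ENNReal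

namespace MeasureTheory

variable {α : Type*} [MeasurableSpace α]

noncomputable def atomicMeasure : (α →₀ ℝ≥0) →+ Measure α :=
  Finsupp.liftAddHom fun x => (smulAddHom ℝ≥0 (Measure α)).flip (Measure.dirac x)

lemma atomicMeasure_eq_sum (w : α →₀ ℝ≥0) :
    atomicMeasure w = ∑ x ∈ w.support, w x • Measure.dirac x := by
  simp [atomicMeasure, Finsupp.sum]

lemma exists_atomicMeasure_eq_fin_sum (w : α →₀ ℝ≥0) :
    ∃ (J : ℕ) (ω : Fin J → ℝ) (pts : Fin J → α), (∀ j, 0 < ω j) ∧ (∀ j, pts j ∈ w.support) ∧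
      atomicMeasure w = ∑ j, ENNReal.ofReal (ω j) • Measure.dirac (pts j) := by
  set e := w.support.equivFin.symm
  refine ⟨w.support.card, fun j => w (e j), fun j => e j, fun j => ?_, fun j => (e j).2, ?_⟩
  · exact NNReal.coe_pos.2 (pos_iff_ne_zero.2 (Finsupp.mem_support_iff.1 (e j).2))
  · rw [atomicMeasure_eq_sum, ← Finset.sum_coe_sort, ← e.sum_comp]
    simp [ENNReal.ofReal_coe_nnreal]

variable [MeasurableSingletonClass α]

lemma integrable_atomicMeasure (w : α →₀ ℝ≥0) (g : α → ℝ) : Integrable g (atomicMeasure w) := by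
  rw [atomicMeasure_eq_sum]
  exact integrable_finsetSum_measure.2 fun x _ =>
    (integrable_dirac enorm_lt_top).smul_measure ENNReal.coe_ne_top

instance (w : α →₀ ℝ≥0) : IsFiniteMeasure (atomicMeasure w) :=
  (integrable_const_iff_isFiniteMeasure one_ne_zero).1 (integrable_atomicMeasure w 1)

lemma integral_atomicMeasure (w : α →₀ ℝ≥0) (g : α → ℝ) :
    ∫ x, g x ∂(atomicMeasure w) = w.sum fun x c => (c : ℝ) * g x := by
  rw [atomicMeasure_eq_sum, integral_finsetSum_measure fun x _ =>
    (integrable_dirac enorm_lt_top).smul_measure ENNReal.coe_ne_top]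
  simp [Finsupp.sum, NNReal.smul_def]

lemma integral_atomicMeasure_add (v w : α →₀ ℝ≥0) (g : α → ℝ) :
    ∫ x, g x ∂atomicMeasure (v + w) = ∫ x, g x ∂atomicMeasure v + ∫ x, g x ∂atomicMeasure w := by
  rw [map_add, integral_add_measure (integrable_atomicMeasure v g) (integrable_atomicMeasure w g)]

lemma atomicMeasure_apply_eq_zero_iff {w : α →₀ ℝ≥0} {s : Set α} :
    atomicMeasure w s = 0 ↔ ∀ x ∈ w.support, x ∉ s := by
  simp only [atomicMeasure_eq_sum, Measure.coe_finsetSum, Finset.sum_apply, Measure.smul_apply,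
    Finset.sum_eq_zero_iff, smul_eq_zero, Measure.dirac_apply, Set.indicator_apply_eq_zero]
  exact forall₂_congr fun x hx => or_iff_right (Finsupp.mem_support_iff.1 hx) |>.trans (by simp)

lemma atomicMeasure_singleton (w : α →₀ ℝ≥0) (x : α) : atomicMeasure w {x} = w x := by
  rw [atomicMeasure_eq_sum, Measure.coe_finsetSum, Finset.sum_apply,
    Finset.sum_eq_single x (fun y _ hy => by simp [hy]) (fun hx => by simp_all)]
  simp

lemma atomicMeasure_singleton_pos_iff {w : α →₀ ℝ≥0} {x : α} :
    0 < atomicMeasure w {x} ↔ x ∈ w.support := by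
  simp [atomicMeasure_singleton, pos_iff_ne_zero]

lemma eq_of_atomicMeasure_singleton_pos {w : α →₀ ℝ≥0} {s : Set α}
    (hs : ((w.support : Set α) ∩ s).Subsingleton) {x y : α} (hx : x ∈ s) (hy : y ∈ s)
    (hx0 : 0 < atomicMeasure w {x}) (hy0 : 0 < atomicMeasure w {y}) : x = y :=
  hs ⟨atomicMeasure_singleton_pos_iff.1 hx0, hx⟩ ⟨atomicMeasure_singleton_pos_iff.1 hy0, hy⟩

lemma ae_atomicMeasure_iff {w : α →₀ ℝ≥0} {p : α → Prop} :
    (∀ᵐ x ∂atomicMeasure w, p x) ↔ ∀ x ∈ w.support, p x := by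
  rw [ae_iff, atomicMeasure_apply_eq_zero_iff]
  simp

end MeasureTheory

section Barycenter

variable {σ : Measure ℝ} [IsFiniteMeasure σ]

lemma ConvexOn.measureReal_univ_mul_map_average_le {g : ℝ → ℝ} (hg : ConvexOn ℝ univ g)
    (hgc : Continuous g) (hid : Integrable (fun x => x) σ) (hgi : Integrable g σ) :
    σ.real univ * g (⨍ x, x ∂σ) ≤ ∫ x, g x ∂σ := by
  rcases eq_zero_or_neZero σ with rfl | hσ
  · simp
  calc σ.real univ * g (⨍ x, x ∂σ) ≤ σ.real univ * ⨍ x, g x ∂σ :=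
        mul_le_mul_of_nonneg_left
          (hg.map_average_le hgc.continuousOn isClosed_univ (by simp) hid hgi) measureReal_nonneg
    _ = ∫ x, g x ∂σ := by
        rw [average_eq, smul_eq_mul, mul_inv_cancel_left₀ measureReal_univ_ne_zero]

lemma measureReal_univ_mul_map_average_eq {s : Set ℝ} (hs : Convex ℝ s) (hsc : IsClosed s)
    (hσs : ∀ᵐ x ∂σ, x ∈ s) {g : ℝ → ℝ} {a b : ℝ} (hg : ∀ x ∈ s, g x = a * x + b)
    (hid : Integrable (fun x => x) σ) :
    σ.real univ * g (⨍ x, x ∂σ) = ∫ x, g x ∂σ := by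
  rcases eq_zero_or_neZero σ with rfl | hσ
  · simp
  rw [hg _ (hs.average_mem hsc hσs hid), integral_congr_ae (hσs.mono fun x hx => hg x hx),
    integral_add (hid.const_mul a) (integrable_const b), integral_const_mul, integral_const,
    average_eq, smul_eq_mul, smul_eq_mul]
  field_simp [measureReal_univ_ne_zero (μ := σ)]

end Barycenter

lemma integral_eq_sum_setIntegral {X ι : Type*} [MeasurableSpace X] [Fintype ι] {μ : Measure X}
    {P : ι → Set X} (hP : ∀ i, MeasurableSet (P i)) (hdisj : Pairwise (Disjoint on P))
    (hcover : ⋃ i, P i = univ) {g : X → ℝ} (hgi : Integrable g μ) :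
    ∫ x, g x ∂μ = ∑ i, ∫ x in P i, g x ∂μ := by
  rw [← integral_iUnion_fintype hP hdisj fun i => hgi.integrableOn, hcover, setIntegral_univ]

section Collapse

variable {ι : Type*} [Fintype ι]

-- A piece of measure zero contributes `single _ 0 = 0`, so its junk average is harmless.
noncomputable def collapse (μ : Measure ℝ) (P : ι → Set ℝ) : ℝ →₀ ℝ≥0 :=
  ∑ i, Finsupp.single (⨍ x in P i, x ∂μ) (μ (P i)).toNNReal

variable {μ : Measure ℝ} {P : ι → Set ℝ}

lemma integral_atomicMeasure_collapse (g : ℝ → ℝ) :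
    ∫ x, g x ∂atomicMeasure (collapse μ P) = ∑ i, μ.real (P i) * g (⨍ x in P i, x ∂μ) := by
  rw [integral_atomicMeasure, collapse, ← Finsupp.sum_finsetSum_index (by simp) (by simp [add_mul])]
  simp [measureReal_def, ENNReal.coe_toNNReal_eq_toReal]

lemma exists_eq_setAverage_of_mem_support_collapse {x : ℝ} (hx : x ∈ (collapse μ P).support) :
    ∃ i, x = ⨍ y in P i, y ∂μ := by
  obtain ⟨i, -, hi⟩ := Finsupp.mem_support_finsetSum x hx
  exact ⟨i, Finset.mem_singleton.1 (Finsupp.support_single_subset hi)⟩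

lemma nonneg_of_mem_support_collapse (hμ : ∀ᵐ x ∂μ, 0 ≤ x) {x : ℝ}
    (hx : x ∈ (collapse μ P).support) : 0 ≤ x := by
  obtain ⟨i, rfl⟩ := exists_eq_setAverage_of_mem_support_collapse hx
  rw [setAverage_eq, smul_eq_mul]
  exact mul_nonneg (inv_nonneg.2 measureReal_nonneg) (integral_nonneg_of_ae (ae_restrict_of_ae hμ))

variable [IsFiniteMeasure μ] (hP : ∀ i, MeasurableSet (P i)) (hdisj : Pairwise (Disjoint on P))
  (hcover : ⋃ i, P i = univ) (hid : Integrable (fun x => x) μ)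
include hP hdisj hcover hid

lemma integral_atomicMeasure_collapse_le {g : ℝ → ℝ} (hg : ConvexOn ℝ univ g)
    (hgc : Continuous g) (hgi : Integrable g μ) :
    ∫ x, g x ∂atomicMeasure (collapse μ P) ≤ ∫ x, g x ∂μ := by
  rw [integral_atomicMeasure_collapse, integral_eq_sum_setIntegral hP hdisj hcover hgi]
  refine Finset.sum_le_sum fun i _ => ?_
  simpa [measureReal_restrict_apply_univ] using
    hg.measureReal_univ_mul_map_average_le (σ := μ.restrict (P i)) hgc hid.integrableOn
      hgi.integrableOn

lemma integral_atomicMeasure_collapse_eq {C : ι → Set ℝ} (hC : ∀ i, Convex ℝ (C i))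
    (hCc : ∀ i, IsClosed (C i)) (hPC : ∀ i, ∀ᵐ x ∂μ.restrict (P i), x ∈ C i) {g : ℝ → ℝ}
    (hg : ∀ i, ∃ a b : ℝ, ∀ x ∈ C i, g x = a * x + b) (hgi : Integrable g μ) :
    ∫ x, g x ∂atomicMeasure (collapse μ P) = ∫ x, g x ∂μ := by
  rw [integral_atomicMeasure_collapse, integral_eq_sum_setIntegral hP hdisj hcover hgi]
  refine Finset.sum_congr rfl fun i _ => ?_
  obtain ⟨a, b, hab⟩ := hg i
  simpa [measureReal_restrict_apply_univ] using
    measureReal_univ_mul_map_average_eq (hC i) (hCc i) (hPC i) hab hid.integrableOn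

end Collapse

section MergeAtoms

open Classical

noncomputable def mergeAtoms (w : ℝ →₀ ℝ≥0) (C : Set ℝ) : ℝ →₀ ℝ≥0 :=
  w.filter (· ∉ C) + collapse (atomicMeasure (w.filter (· ∈ C))) fun _ : Unit => univ

variable {w : ℝ →₀ ℝ≥0} {C : Set ℝ}

lemma integral_atomicMeasure_eq_filter_add (w : ℝ →₀ ℝ≥0) (C : Set ℝ) (g : ℝ → ℝ) :
    ∫ x, g x ∂atomicMeasure w = ∫ x, g x ∂atomicMeasure (w.filter (· ∉ C)) +
      ∫ x, g x ∂atomicMeasure (w.filter (· ∈ C)) := by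
  rw [← integral_atomicMeasure_add, add_comm, Finsupp.filter_add_filter_not]

lemma integral_atomicMeasure_mergeAtoms_le {g : ℝ → ℝ} (hg : ConvexOn ℝ univ g)
    (hgc : Continuous g) :
    ∫ x, g x ∂atomicMeasure (mergeAtoms w C) ≤ ∫ x, g x ∂atomicMeasure w := by
  rw [mergeAtoms, integral_atomicMeasure_add, integral_atomicMeasure_eq_filter_add w C g]
  exact (add_le_add_iff_left _).2 <| integral_atomicMeasure_collapse_le
    (fun _ : Unit => MeasurableSet.univ) Subsingleton.pairwise (iUnion_const univ)
    (integrable_atomicMeasure _ _) hg hgc (integrable_atomicMeasure _ g)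

lemma integral_atomicMeasure_mergeAtoms_eq (hC : Convex ℝ C) (hCc : IsClosed C) {g : ℝ → ℝ}
    (hg : ∃ a b : ℝ, ∀ x ∈ C, g x = a * x + b) :
    ∫ x, g x ∂atomicMeasure (mergeAtoms w C) = ∫ x, g x ∂atomicMeasure w := by
  have hwC : ∀ᵐ x ∂(atomicMeasure (w.filter (· ∈ C))).restrict univ, x ∈ C := by
    rw [Measure.restrict_univ, ae_atomicMeasure_iff]
    exact fun x hx => (Finset.mem_filter.1 hx).2
  rw [mergeAtoms, integral_atomicMeasure_add, integral_atomicMeasure_eq_filter_add w C g,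
    integral_atomicMeasure_collapse_eq (fun _ : Unit => MeasurableSet.univ) Subsingleton.pairwise
      (iUnion_const univ) (integrable_atomicMeasure _ _) (fun _ => hC) (fun _ => hCc)
      (fun _ => hwC) (fun _ => hg) (integrable_atomicMeasure _ g)]

lemma nonneg_of_mem_support_mergeAtoms (hw : ∀ x ∈ w.support, 0 ≤ x) {x : ℝ}
    (hx : x ∈ (mergeAtoms w C).support) : 0 ≤ x := by
  rcases Finset.mem_union.1 (Finsupp.support_add hx) with hx | hx
  · exact hw x (Finset.mem_filter.1 hx).1
  · exact nonneg_of_mem_support_collapse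
      (ae_atomicMeasure_iff.2 fun z hz => hw z (Finset.mem_filter.1 hz).1) hx

lemma card_support_mergeAtoms_lt {x y : ℝ} (hx : x ∈ w.support) (hy : y ∈ w.support)
    (hxC : x ∈ C) (hyC : y ∈ C) (hxy : x ≠ y) :
    (mergeAtoms w C).support.card < w.support.card := by
  set c := collapse (atomicMeasure (w.filter (· ∈ C))) fun _ : Unit => univ
  have hc : c.support.card ≤ 1 := by
    refine Finset.card_le_one.2 fun a ha b hb => ?_
    obtain ⟨-, rfl⟩ := exists_eq_setAverage_of_mem_support_collapse ha
    obtain ⟨-, rfl⟩ := exists_eq_setAverage_of_mem_support_collapse hb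
    rfl
  have hin : 1 < (w.filter (· ∈ C)).support.card :=
    Finset.one_lt_card.2 ⟨x, Finset.mem_filter.2 ⟨hx, hxC⟩, y, Finset.mem_filter.2 ⟨hy, hyC⟩, hxy⟩
  have hsplit : (w.filter (· ∈ C)).support.card + (w.filter (· ∉ C)).support.card =
      w.support.card :=
    Finset.card_filter_add_card_filter_not _
  calc (mergeAtoms w C).support.card
      ≤ ((w.filter (· ∉ C)).support ∪ c.support).card := Finset.card_le_card Finsupp.support_add
    _ ≤ (w.filter (· ∉ C)).support.card + c.support.card := Finset.card_union_le _ _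
    _ < w.support.card := by omega

end MergeAtoms

section Strikes

variable {ι : Type*} {ks q : ι → ℝ} {d : ℕ} {M k : ℝ} {μ : Measure ℝ}

noncomputable def callPrice (k : ℝ) (μ : Measure ℝ) : ℝ := ∫ x, max 0 (x - k) ∂μ

def feasibleSet (ks q : ι → ℝ) (d : ℕ) (M : ℝ) : Set (Measure ℝ) :=
  {μ | IsProbabilityMeasure μ ∧ μ (Iio 0) = 0 ∧
    (∀ j, Integrable (fun x => max 0 (x - ks j)) μ ∧ ∫ x, max 0 (x - ks j) ∂μ = q j) ∧
    Integrable (fun x => x ^ d) μ ∧ ∫ x, x ^ d ∂μ ≤ M}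

def IsOptimal (ks q : ι → ℝ) (d : ℕ) (M k : ℝ) (μ : Measure ℝ) : Prop :=
  μ ∈ feasibleSet ks q d M ∧ IsMinOn (callPrice k) (feasibleSet ks q d M) μ

def StrikeFree (ks : ι → ℝ) (s : Set ℝ) : Prop :=
  ∀ i, s ⊆ Iic (ks i) ∨ s ⊆ Ici (ks i)

lemma StrikeFree.exists_call_eq_affine {s : Set ℝ} (h : StrikeFree ks s) (i : ι) :
    ∃ a b : ℝ, ∀ x ∈ s, max 0 (x - ks i) = a * x + b := by
  rcases h i with h | h
  · exact ⟨0, 0, fun x hx => by simpa using h hx⟩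
  · exact ⟨1, -ks i, fun x hx => by simpa [sub_eq_add_neg] using h hx⟩

lemma convexOn_call (k : ℝ) : ConvexOn ℝ univ fun x : ℝ => max 0 (x - k) :=
  (convexOn_const 0 convex_univ).sup ((convexOn_id convex_univ).add_const (-k))

lemma continuous_call (k : ℝ) : Continuous fun x : ℝ => max 0 (x - k) := by
  fun_prop

lemma integrable_call [IsFiniteMeasure μ] (hid : Integrable (fun x => x) μ) (k : ℝ) :
    Integrable (fun x => max 0 (x - k)) μ :=
  (integrable_const 0).sup (hid.sub (integrable_const k))

lemma ae_nonneg_of_mem_feasibleSet (hμ : μ ∈ feasibleSet ks q d M) : ∀ᵐ x ∂μ, 0 ≤ x := by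
  simpa using measure_eq_zero_iff_ae_notMem.1 hμ.2.1

lemma integrable_id_of_mem_feasibleSet (i : ι) (hμ : μ ∈ feasibleSet ks q d M) :
    Integrable (fun x => x) μ := by
  have := hμ.1
  refine ((hμ.2.2.1 i).1.add (integrable_const |ks i|)).mono' (by fun_prop) ?_
  filter_upwards [ae_nonneg_of_mem_feasibleSet hμ] with x hx
  rw [Real.norm_eq_abs, abs_of_nonneg hx, Pi.add_apply]
  linarith [le_max_right 0 (x - ks i), le_abs_self (ks i)]

lemma nonneg_of_mem_support {w : ℝ →₀ ℝ≥0} (hw : atomicMeasure w ∈ feasibleSet ks q d M) {x : ℝ}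
    (hx : x ∈ w.support) : 0 ≤ x :=
  not_lt.1 (atomicMeasure_apply_eq_zero_iff.1 hw.2.1 x hx)

lemma exists_mem_support_lt_of_callPrice_pos {w : ℝ →₀ ℝ≥0} {a : ℝ}
    (h : 0 < callPrice a (atomicMeasure w)) : ∃ x ∈ w.support, a < x := by
  by_contra! hle
  rw [callPrice, integral_atomicMeasure, Finsupp.sum,
    Finset.sum_eq_zero fun x hx => by simp [max_eq_left (sub_nonpos.2 (hle x hx))]] at h
  exact lt_irrefl 0 h

lemma isOptimal_iff_callPrice_eq_sInf (hμ : μ ∈ feasibleSet ks q d M) :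
    IsOptimal ks q d M k μ ↔ callPrice k μ = sInf (callPrice k '' feasibleSet ks q d M) := by
  have hbdd : BddBelow (callPrice k '' feasibleSet ks q d M) :=
    ⟨0, by rintro _ ⟨ν, -, rfl⟩; exact integral_nonneg fun x => le_max_left _ _⟩
  refine ⟨fun h => (IsLeast.csInf_eq ⟨mem_image_of_mem _ hμ, ?_⟩).symm,
    fun h => ⟨hμ, fun ν hν => h.trans_le (csInf_le hbdd (mem_image_of_mem _ hν))⟩⟩
  rintro _ ⟨ν, hν, rfl⟩
  exact h.2 hν

lemma IsOptimal.atomicMeasure_of_le [Nonempty ι] (hd : Even d) (hμ : IsOptimal ks q d M k μ)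
    {w : ℝ →₀ ℝ≥0} (hw : ∀ x ∈ w.support, 0 ≤ x)
    (hone : ∫ _, (1 : ℝ) ∂atomicMeasure w = ∫ _, (1 : ℝ) ∂μ)
    (hcall : ∀ i, callPrice (ks i) (atomicMeasure w) = callPrice (ks i) μ)
    (hconv : ∀ g : ℝ → ℝ, ConvexOn ℝ univ g → Continuous g → Integrable g μ →
      ∫ x, g x ∂atomicMeasure w ≤ ∫ x, g x ∂μ) :
    IsOptimal ks q d M k (atomicMeasure w) := by
  obtain ⟨hμF, hmin⟩ := hμ
  obtain ⟨hprob, -, hq, hpowi, hpow⟩ := id hμF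
  have hid := integrable_id_of_mem_feasibleSet (Classical.arbitrary ι) hμF
  have hF : atomicMeasure w ∈ feasibleSet ks q d M := by
    refine ⟨⟨?_⟩, atomicMeasure_apply_eq_zero_iff.2 fun x hx => not_lt.2 (hw x hx),
      fun i => ⟨integrable_atomicMeasure _ _, (hcall i).trans (hq i).2⟩,
      integrable_atomicMeasure _ _, (hconv _ hd.convexOn_pow (continuous_pow d) hpowi).trans hpow⟩
    simpa [measureReal_def, ENNReal.toReal_eq_one_iff] using hone
  exact ⟨hF, fun ν hν =>
    (hconv _ (convexOn_call k) (continuous_call k) (integrable_call hid k)).trans (hmin hν)⟩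

end Strikes

section StrikeRegion

variable {ι : Type*} [DecidableEq ι] (ks : ι → ℝ)

def strikeRegion (T : Finset ι) : Set ℝ :=
  ⋂ i, if i ∈ T then Ioi (ks i) else Iic (ks i)

def closedStrikeRegion (T : Finset ι) : Set ℝ :=
  ⋂ i, if i ∈ T then Ici (ks i) else Iic (ks i)

variable {ks}

lemma mem_strikeRegion {T : Finset ι} {x : ℝ} :
    x ∈ strikeRegion ks T ↔ ∀ i, ks i < x ↔ i ∈ T := by
  simp only [strikeRegion, mem_iInter]
  refine forall_congr' fun i => ?_
  split_ifs with hi <;> simp [hi]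

lemma measurableSet_strikeRegion [Countable ι] (T : Finset ι) :
    MeasurableSet (strikeRegion ks T) := by
  refine MeasurableSet.iInter fun i => ?_
  split_ifs
  exacts [measurableSet_Ioi, measurableSet_Iic]

lemma pairwise_disjoint_strikeRegion : Pairwise (Disjoint on strikeRegion ks) := by
  refine fun T T' hTT' => Set.disjoint_left.2 fun x hx hx' => hTT' ?_
  ext i
  rw [← mem_strikeRegion.1 hx i, mem_strikeRegion.1 hx' i]

lemma iUnion_strikeRegion [Fintype ι] : ⋃ T, strikeRegion ks T = univ := by
  refine eq_univ_of_forall fun x => mem_iUnion.2 ⟨({i | ks i < x} : Finset ι), ?_⟩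
  simp [mem_strikeRegion]

lemma strikeRegion_subset_closedStrikeRegion (T : Finset ι) :
    strikeRegion ks T ⊆ closedStrikeRegion ks T := by
  refine iInter_mono fun i => ?_
  split_ifs
  exacts [Ioi_subset_Ici_self, subset_rfl]

lemma isClosed_closedStrikeRegion (T : Finset ι) : IsClosed (closedStrikeRegion ks T) := by
  refine isClosed_iInter fun i => ?_
  split_ifs
  exacts [isClosed_Ici, isClosed_Iic]

lemma convex_closedStrikeRegion (T : Finset ι) : Convex ℝ (closedStrikeRegion ks T) := by
  refine convex_iInter fun i => ?_
  split_ifs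
  exacts [convex_Ici _, convex_Iic _]

lemma strikeFree_closedStrikeRegion (T : Finset ι) : StrikeFree ks (closedStrikeRegion ks T) := by
  intro i
  by_cases hi : i ∈ T
  · exact Or.inr ((iInter_subset _ i).trans (by simp [hi]))
  · exact Or.inl ((iInter_subset _ i).trans (by simp [hi]))

end StrikeRegion

section Optimal

variable {ι : Type*} {ks q : ι → ℝ} {d : ℕ} {M k : ℝ}

theorem IsOptimal.exists_atomicMeasure [Fintype ι] [DecidableEq ι] [Nonempty ι] (hd : Even d)
    {μ : Measure ℝ} (hμ : IsOptimal ks q d M k μ) : ∃ w, IsOptimal ks q d M k (atomicMeasure w) := by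
  have := hμ.1.1
  have hid := integrable_id_of_mem_feasibleSet (Classical.arbitrary ι) hμ.1
  have hPC : ∀ T, ∀ᵐ x ∂μ.restrict (strikeRegion ks T), x ∈ closedStrikeRegion ks T := fun T =>
    ae_restrict_of_forall_mem (measurableSet_strikeRegion T)
      (strikeRegion_subset_closedStrikeRegion T)
  have haffine : ∀ {g : ℝ → ℝ}, (∀ T, ∃ a b : ℝ, ∀ x ∈ closedStrikeRegion ks T, g x = a * x + b) →
      Integrable g μ → ∫ x, g x ∂atomicMeasure (collapse μ (strikeRegion ks)) = ∫ x, g x ∂μ :=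
    integral_atomicMeasure_collapse_eq measurableSet_strikeRegion pairwise_disjoint_strikeRegion
      iUnion_strikeRegion hid convex_closedStrikeRegion isClosed_closedStrikeRegion hPC
  refine ⟨_, hμ.atomicMeasure_of_le hd
    (fun x => nonneg_of_mem_support_collapse (ae_nonneg_of_mem_feasibleSet hμ.1))
    (haffine (fun _ => ⟨0, 1, by simp⟩) (integrable_const 1))
    (fun i => haffine (fun T => (strikeFree_closedStrikeRegion T).exists_call_eq_affine i)
      (hμ.1.2.2.1 i).1)
    (fun g hg hgc hgi => integral_atomicMeasure_collapse_le measurableSet_strikeRegion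
      pairwise_disjoint_strikeRegion iUnion_strikeRegion hid hg hgc hgi)⟩

theorem IsOptimal.exists_card_support_lt [Nonempty ι] (hd : Even d) {w : ℝ →₀ ℝ≥0}
    (hw : IsOptimal ks q d M k (atomicMeasure w)) {C : Set ℝ} (hC : Convex ℝ C)
    (hCc : IsClosed C) (hCs : StrikeFree ks C) {x y : ℝ} (hx : x ∈ w.support) (hy : y ∈ w.support)
    (hxC : x ∈ C) (hyC : y ∈ C) (hxy : x ≠ y) :
    ∃ w', IsOptimal ks q d M k (atomicMeasure w') ∧ w'.support.card < w.support.card :=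
  ⟨mergeAtoms w C, hw.atomicMeasure_of_le hd
    (fun _ => nonneg_of_mem_support_mergeAtoms fun _ => nonneg_of_mem_support hw.1)
    (integral_atomicMeasure_mergeAtoms_eq hC hCc ⟨0, 1, by simp⟩)
    (fun i => integral_atomicMeasure_mergeAtoms_eq hC hCc (hCs.exists_call_eq_affine i))
    (fun _ hg hgc _ => integral_atomicMeasure_mergeAtoms_le hg hgc),
    card_support_mergeAtoms_lt hx hy hxC hyC hxy⟩

theorem IsOptimal.exists_subsingleton_support_inter [Nonempty ι] (hd : Even d)
    (𝒞 : Set (Set ℝ)) (h𝒞 : ∀ C ∈ 𝒞, Convex ℝ C ∧ IsClosed C ∧ StrikeFree ks C)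
    {w : ℝ →₀ ℝ≥0} (hw : IsOptimal ks q d M k (atomicMeasure w)) :
    ∃ w', IsOptimal ks q d M k (atomicMeasure w') ∧
      ∀ C ∈ 𝒞, ((w'.support : Set ℝ) ∩ C).Subsingleton := by
  induction h : w.support.card using Nat.strong_induction_on generalizing w with
  | _ n ih =>
    by_cases hsub : ∀ C ∈ 𝒞, ((w.support : Set ℝ) ∩ C).Subsingleton
    · exact ⟨w, hw, hsub⟩
    push Not at hsub
    obtain ⟨C, hC, ⟨x, ⟨hx, hxC⟩, y, ⟨hy, hyC⟩, hxy⟩⟩ := hsub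
    obtain ⟨hCc, hCcl, hCs⟩ := h𝒞 C hC
    obtain ⟨w', hw', hlt⟩ := hw.exists_card_support_lt hd hCc hCcl hCs hx hy hxC hyC hxy
    exact ih _ (h ▸ hlt) hw' rfl

end Optimal

section StrikeCells

variable {N : ℕ} (hN : 0 < N) (ks : Fin N → ℝ)

/-- The top cell is taken closed, `[k_N, ∞)`, so that merging inside it is Jensen on a closed set;
one atom there is still exactly one atom in `(k_N, ∞)`, since `q_N > 0` puts an atom above `k_N`. -/
def strikeCells : Set (Set ℝ) :=
  {C | C = Icc 0 (ks ⟨0, hN⟩) ∨ C = Ici (ks ⟨N - 1, Nat.sub_lt hN one_pos⟩) ∨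
    ∃ j, ∃ hj : j + 1 < N, C = Icc (ks ⟨j, Nat.lt_of_succ_lt hj⟩) (ks ⟨j + 1, hj⟩)}

variable {hN ks}

lemma convex_isClosed_strikeFree_of_mem_strikeCells (hmono : Monotone ks) {C : Set ℝ}
    (hC : C ∈ strikeCells hN ks) : Convex ℝ C ∧ IsClosed C ∧ StrikeFree ks C := by
  rcases hC with rfl | rfl | ⟨j, hj, rfl⟩
  · refine ⟨convex_Icc _ _, isClosed_Icc, fun i => Or.inl ?_⟩
    exact Icc_subset_Iic_self.trans (Iic_subset_Iic.2 (hmono (Fin.mk_le_mk.2 (Nat.zero_le _))))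
  · refine ⟨convex_Ici _, isClosed_Ici, fun i => Or.inr ?_⟩
    exact Ici_subset_Ici.2 (hmono (Fin.mk_le_mk.2 (by omega)))
  · refine ⟨convex_Icc _ _, isClosed_Icc, fun i => ?_⟩
    rcases le_or_gt i.val j with hij | hij
    · exact Or.inr (Icc_subset_Ici_self.trans (Ici_subset_Ici.2 (hmono (Fin.mk_le_mk.2 hij))))
    · exact Or.inl (Icc_subset_Iic_self.trans (Iic_subset_Iic.2 (hmono (Fin.mk_le_mk.2 hij))))

end StrikeCells

/-- Lemma 5: in the univariate problem, if the infimum is attained then it is attained by a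
finitely atomic measure with exactly one atom in `(k_N, ∞)` and at most one atom in each of
the intervals `[0, k₁], [k₁, k₂], …, [k_{N-1}, k_N]`. -/
theorem univariate_atom_location
    (N : ℕ) (hN : 0 < N)
    (ks : Fin N → ℝ) (q : Fin N → ℝ)
    (hmono : Monotone ks)
    (k₁ : ℝ) (hk₁ : k₁ = ks ⟨0, hN⟩)
    (kN : ℝ) (hkN : kN = ks ⟨N - 1, Nat.sub_lt hN one_pos⟩)
    (qN : ℝ) (hqN : qN = q ⟨N - 1, Nat.sub_lt hN one_pos⟩) (hqNpos : 0 < qN)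
    (k : ℝ)
    (d : ℕ) (hdeven : Even d)
    (M : ℝ)
    (F : Set (Measure ℝ))
    (hF : F = {μ | IsProbabilityMeasure μ ∧ μ (Set.Iio 0) = 0 ∧
        (∀ j, Integrable (fun x => max 0 (x - ks j)) μ ∧
          ∫ x, max 0 (x - ks j) ∂μ = q j) ∧
        Integrable (fun x => x ^ d) μ ∧ ∫ x, x ^ d ∂μ ≤ M})
    (hatt : ∃ μ ∈ F, ∫ x, max 0 (x - k) ∂μ =
        sInf ((fun ν => ∫ x, max 0 (x - k) ∂ν) '' F)) :
    ∃ μ ∈ F, ∫ x, max 0 (x - k) ∂μ = sInf ((fun ν => ∫ x, max 0 (x - k) ∂ν) '' F) ∧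
      -- μ is finitely atomic
      (∃ (J : ℕ) (ω : Fin J → ℝ) (pts : Fin J → ℝ),
        (∀ j, 0 < ω j) ∧ (∀ j, 0 ≤ pts j) ∧
        μ = ∑ j, ENNReal.ofReal (ω j) • Measure.dirac (pts j)) ∧
      -- exactly one atom in (kN, ∞)
      (∃ xstar : ℝ, kN < xstar ∧ 0 < μ {xstar} ∧ μ (Set.Ioi kN \ {xstar}) = 0) ∧
      -- at most one atom in [0, k₁]
      (∀ x y : ℝ, x ∈ Set.Icc 0 k₁ → y ∈ Set.Icc 0 k₁ →
        0 < μ {x} → 0 < μ {y} → x = y) ∧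
      -- at most one atom in each [k_j, k_{j+1}]
      (∀ (j : ℕ) (hj : j + 1 < N), ∀ x y : ℝ,
        x ∈ Set.Icc (ks ⟨j, by omega⟩) (ks ⟨j + 1, hj⟩) →
        y ∈ Set.Icc (ks ⟨j, by omega⟩) (ks ⟨j + 1, hj⟩) →
        0 < μ {x} → 0 < μ {y} → x = y) := by
  have : Nonempty (Fin N) := ⟨⟨0, hN⟩⟩
  change F = feasibleSet ks q d M at hF
  subst hF hk₁ hkN hqN
  obtain ⟨μ₀, hμ₀, hμ₀min⟩ := hatt
  obtain ⟨w₀, hw₀⟩ := ((isOptimal_iff_callPrice_eq_sInf hμ₀).2 hμ₀min).exists_atomicMeasure hdeven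
  obtain ⟨w, hw, hsub⟩ := hw₀.exists_subsingleton_support_inter hdeven (strikeCells hN ks)
    fun C => convex_isClosed_strikeFree_of_mem_strikeCells hmono
  obtain ⟨xstar, hxstar, hgt⟩ :=
    exists_mem_support_lt_of_callPrice_pos (((hw.1.2.2.1 _).2).trans_gt hqNpos)
  obtain ⟨J, ω, pts, hω, hpts, hsum⟩ := exists_atomicMeasure_eq_fin_sum w
  refine ⟨atomicMeasure w, hw.1, (isOptimal_iff_callPrice_eq_sInf hw.1).1 hw,
    ⟨J, ω, pts, hω, fun j => nonneg_of_mem_support hw.1 (hpts j), hsum⟩,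
    ⟨xstar, hgt, atomicMeasure_singleton_pos_iff.2 hxstar, ?_⟩,
    fun x y => eq_of_atomicMeasure_singleton_pos (hsub _ (Or.inl rfl)),
    fun j hj x y => eq_of_atomicMeasure_singleton_pos (hsub _ (Or.inr (Or.inr ⟨j, hj, rfl⟩)))⟩
  refine atomicMeasure_apply_eq_zero_iff.2 fun x hx hxI => hxI.2 ?_
  exact hsub _ (Or.inr (Or.inl rfl)) ⟨hx, mem_Ici_of_Ioi hxI.1⟩ ⟨hxstar, mem_Ici_of_Ioi hgt⟩
end
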